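/- Let Φ₂ : Ω → ℂ be a function on an open set Ω ⊆ A₃ ≅ ℂ³ such that at every point the directional derivatives of Φ₂ in the directions ±ρ, ±iρ, ±ρ², ±iρ² all vanish. If every intersection of Ω with a hyperplane parallel to the radical I = ℂρ + ℂρ² is connected, then Φ₂(ζ) depends only on f(ζ), i.e., Φ₂(ζ) = F₂(f(ζ)) for some function F₂ on f(Ω). -/

import Mathlib

open scoped Topology
open Filter

noncomputable section

/-- The three-dimensional commutative algebra `A₃ = ℂ[ρ]/(ρ³)`,
represented by coordinates in the Cartan basis `{1, ρ, ρ²}`. -/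
@[ext] structure A3 : Type where
  x0 : ℂ
  x1 : ℂ
  x2 : ℂ

namespace A3

instance : Zero A3 := ⟨⟨0,0,0⟩⟩
instance : One A3 := ⟨⟨1,0,0⟩⟩
instance : Add A3 := ⟨fun u v => ⟨u.x0+v.x0, u.x1+v.x1, u.x2+v.x2⟩⟩
instance : Neg A3 := ⟨fun u => ⟨-u.x0, -u.x1, -u.x2⟩⟩
instance : Mul A3 :=
  ⟨fun u v => ⟨u.x0*v.x0, u.x0*v.x1+u.x1*v.x0, u.x0*v.x2+u.x1*v.x1+u.x2*v.x0⟩⟩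
instance : SMul ℂ A3 := ⟨fun a u => ⟨a*u.x0, a*u.x1, a*u.x2⟩⟩

@[simp] lemma zero_x0 : (0:A3).x0 = 0 := rfl
@[simp] lemma zero_x1 : (0:A3).x1 = 0 := rfl
@[simp] lemma zero_x2 : (0:A3).x2 = 0 := rfl
@[simp] lemma one_x0 : (1:A3).x0 = 1 := rfl
@[simp] lemma one_x1 : (1:A3).x1 = 0 := rfl
@[simp] lemma one_x2 : (1:A3).x2 = 0 := rfl
@[simp] lemma add_x0 (u v : A3) : (u+v).x0 = u.x0+v.x0 := rfl
@[simp] lemma add_x1 (u v : A3) : (u+v).x1 = u.x1+v.x1 := rfl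
@[simp] lemma add_x2 (u v : A3) : (u+v).x2 = u.x2+v.x2 := rfl
@[simp] lemma neg_x0 (u : A3) : (-u).x0 = -u.x0 := rfl
@[simp] lemma neg_x1 (u : A3) : (-u).x1 = -u.x1 := rfl
@[simp] lemma neg_x2 (u : A3) : (-u).x2 = -u.x2 := rfl
@[simp] lemma mul_x0 (u v : A3) : (u*v).x0 = u.x0*v.x0 := rfl
@[simp] lemma mul_x1 (u v : A3) : (u*v).x1 = u.x0*v.x1+u.x1*v.x0 := rfl
@[simp] lemma mul_x2 (u v : A3) : (u*v).x2 = u.x0*v.x2+u.x1*v.x1+u.x2*v.x0 := rfl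
@[simp] lemma smul_x0 (a : ℂ) (u : A3) : (a•u).x0 = a*u.x0 := rfl
@[simp] lemma smul_x1 (a : ℂ) (u : A3) : (a•u).x1 = a*u.x1 := rfl
@[simp] lemma smul_x2 (a : ℂ) (u : A3) : (a•u).x2 = a*u.x2 := rfl

instance : AddCommGroup A3 where
  add_assoc u v w := by ext <;> simp <;> ring
  zero_add u := by ext <;> simp
  add_zero u := by ext <;> simp
  add_comm u v := by ext <;> simp <;> ring
  neg_add_cancel u := by ext <;> simp
  nsmul := nsmulRec
  zsmul := zsmulRec

instance : CommRing A3 where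
  __ := (inferInstance : AddCommGroup A3)
  left_distrib u v w := by ext <;> simp <;> ring
  right_distrib u v w := by ext <;> simp <;> ring
  zero_mul u := by ext <;> simp
  mul_zero u := by ext <;> simp
  mul_assoc u v w := by ext <;> simp <;> ring
  one_mul u := by ext <;> simp
  mul_one u := by ext <;> simp
  mul_comm u v := by ext <;> simp <;> ring

instance : Module ℂ A3 where
  one_smul u := by ext <;> simp
  mul_smul a b u := by ext <;> simp <;> ring
  smul_zero a := by ext <;> simp [zero_x0, zero_x1, zero_x2]
  smul_add a u v := by ext <;> simp <;> ring
  add_smul a b u := by ext <;> simp <;> ring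
  zero_smul u := by ext <;> simp [zero_x0, zero_x1, zero_x2]

instance : Algebra ℂ A3 where
  algebraMap :=
  { toFun a := ⟨a, 0, 0⟩
    map_one' := rfl
    map_mul' a b := by ext <;> simp
    map_zero' := rfl
    map_add' a b := by ext <;> simp }
  commutes' a u := by ext <;> simp <;> ring
  smul_def' a u := by ext <;> simp

@[simp] lemma algebraMap_x0 (a : ℂ) : (algebraMap ℂ A3 a).x0 = a := rfl
@[simp] lemma algebraMap_x1 (a : ℂ) : (algebraMap ℂ A3 a).x1 = 0 := rfl
@[simp] lemma algebraMap_x2 (a : ℂ) : (algebraMap ℂ A3 a).x2 = 0 := rfl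

/-- The nilpotent generator `ρ`. -/
def rho : A3 := ⟨0, 1, 0⟩

@[simp] lemma rho_x0 : rho.x0 = 0 := rfl
@[simp] lemma rho_x1 : rho.x1 = 1 := rfl
@[simp] lemma rho_x2 : rho.x2 = 0 := rfl

lemma rho_cube : rho ^ 3 = 0 := by ext <;> simp [pow_succ] <;> ring

/-- The projection `f(a + bρ + cρ²) = a`, as a `ℂ`-algebra homomorphism. -/
def pf : A3 →ₐ[ℂ] ℂ where
  toFun u := u.x0
  map_one' := rfl
  map_mul' u v := rfl
  map_zero' := rfl
  map_add' u v := rfl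
  commutes' a := rfl

@[simp] lemma pf_apply (u : A3) : pf u = u.x0 := rfl

/-- The embedding of `A3` into `EuclideanSpace ℂ (Fin 3)`, used to endow
`A3` with the Euclidean norm on the Cartan coordinates. -/
def toE : A3 →ₗ[ℂ] EuclideanSpace ℂ (Fin 3) where
  toFun u := (WithLp.equiv 2 (Fin 3 → ℂ)).symm ![u.x0, u.x1, u.x2]
  map_add' u v := by
    ext i
    fin_cases i <;> simp [WithLp.equiv_symm_apply]
  map_smul' a u := by
    ext i
    fin_cases i <;> simp [WithLp.equiv_symm_apply]

lemma toE_injective : Function.Injective toE := by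
  intro u v h
  have h0 : toE u 0 = toE v 0 := congrArg (fun w => w 0) h
  have h1 : toE u 1 = toE v 1 := congrArg (fun w => w 1) h
  have h2 : toE u 2 = toE v 2 := congrArg (fun w => w 2) h
  ext
  · exact h0
  · exact h1
  · exact h2

instance : NormedAddCommGroup A3 :=
  NormedAddCommGroup.induced A3 (EuclideanSpace ℂ (Fin 3)) toE.toAddMonoidHom
    toE_injective

instance : NormedSpace ℂ A3 := NormedSpace.induced ℂ A3 (EuclideanSpace ℂ (Fin 3)) toE

lemma norm_def (u : A3) :
    ‖u‖ = Real.sqrt (‖u.x0‖ ^ 2 + ‖u.x1‖ ^ 2 + ‖u.x2‖ ^ 2) := by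
  show ‖toE u‖ = _
  rw [EuclideanSpace.norm_eq]
  simp [toE, Fin.sum_univ_three]

/-- The set `I = {λ₁ρ + λ₂ρ² : λ₁, λ₂ ∈ ℂ}` (the radical of `A₃`). -/
def idealSet : Set A3 := {x | ∃ l1 l2 : ℂ, x = l1 • rho + l2 • rho ^ 2}

/-- The set of directions `{±1, ±i, ±ρ, ±iρ, ±ρ², ±iρ²}`. -/
def dirs : Set A3 :=
  {1, -1, Complex.I • (1:A3), -(Complex.I • (1:A3)),
   rho, -rho, Complex.I • rho, -(Complex.I • rho),
   rho ^ 2, -(rho ^ 2), Complex.I • rho ^ 2, -(Complex.I • rho ^ 2)}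

end A3

namespace A3

lemma rho_sq_x0 : (rho ^ 2 : A3).x0 = 0 := by simp [pow_two]
lemma rho_sq_x1 : (rho ^ 2 : A3).x1 = 0 := by simp [pow_two]
lemma rho_sq_x2 : (rho ^ 2 : A3).x2 = 1 := by simp [pow_two]

lemma norm_combo (c₁ c₂ : ℂ) :
    ‖(c₁ • rho + c₂ • rho ^ 2 : A3)‖ =
      Real.sqrt (‖c₁‖ ^ 2 + ‖c₂‖ ^ 2) := by
  rw [norm_def]
  simp [rho_sq_x0, rho_sq_x1, rho_sq_x2]

end A3

open Filter in
/-- if all directional derivatives of `Φ₂` in the directions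
`±ρ, ±iρ, ±ρ², ±iρ²` vanish on `Ω`, and all intersections of `Ω` with hyperplanes
parallel to the radical are connected, then `Φ₂` depends only on `f(ζ)`. -/
theorem factors_through_pf (Ω : Set A3) (hΩ : IsOpen Ω) (Φ₂ : A3 → ℂ)
    (hconn : ∀ z : ℂ, IsPreconnected (Ω ∩ {ζ : A3 | A3.pf ζ = z}))
    (hder : ∀ ζ ∈ Ω, ∀ h ∈ ({A3.rho, -A3.rho, Complex.I • A3.rho, -(Complex.I • A3.rho),
        A3.rho ^ 2, -(A3.rho ^ 2), Complex.I • A3.rho ^ 2,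
        -(Complex.I • A3.rho ^ 2)} : Set A3),
      Tendsto (fun δ : ℝ => ((δ : ℂ))⁻¹ * (Φ₂ (ζ + (δ : ℂ) • h) - Φ₂ ζ))
        (nhdsWithin 0 (Set.Ioi (0:ℝ))) (nhds (0 : ℂ))) :
    ∃ F₂ : ℂ → ℂ, ∀ ζ ∈ Ω, Φ₂ ζ = F₂ (A3.pf ζ) := by
  classical
  set D : Set A3 := {A3.rho, -A3.rho, Complex.I • A3.rho, -(Complex.I • A3.rho),
        A3.rho ^ 2, -(A3.rho ^ 2), Complex.I • A3.rho ^ 2,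
        -(Complex.I • A3.rho ^ 2)} with hD
  have hDneg : ∀ h ∈ D, -h ∈ D := by
    intro h hh
    simp only [hD, Set.mem_insert_iff, Set.mem_singleton_iff] at hh ⊢
    rcases hh with h1|h1|h1|h1|h1|h1|h1|h1 <;> subst h1 <;> simp <;> tauto
  -- Step 1: the one-dimensional slices have zero derivative at 0.
  have key : ∀ ζ ∈ Ω, ∀ h ∈ D,
      HasDerivAt (fun t : ℝ => Φ₂ (ζ + (t : ℂ) • h)) 0 0 := by
    intro ζ hζ h hh
    rw [hasDerivAt_iff_tendsto_slope_zero, ← nhdsLT_sup_nhdsGT (0:ℝ), tendsto_sup]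
    constructor
    · -- left limit, via the direction `-h`
      have hmap : Filter.map (fun x : ℝ => -x) (nhdsWithin 0 (Set.Ioi (0:ℝ)))
          = nhdsWithin 0 (Set.Iio (0:ℝ)) := by
        have := (Homeomorph.neg ℝ).isEmbedding.map_nhdsWithin_eq (Set.Ioi 0) 0
        simpa [Set.image_neg_Ioi] using this
      rw [← hmap, tendsto_map'_iff]
      have h2 : Tendsto (fun δ : ℝ =>
          -(((δ:ℂ))⁻¹ * (Φ₂ (ζ + (δ:ℂ) • (-h)) - Φ₂ ζ)))
          (nhdsWithin 0 (Set.Ioi (0:ℝ))) (nhds (0:ℂ)) := by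
        simpa using (hder ζ hζ (-h) (hDneg h hh)).neg
      refine h2.congr fun δ => ?_
      show -(((δ:ℂ))⁻¹ * (Φ₂ (ζ + (δ:ℂ) • (-h)) - Φ₂ ζ))
          = (-δ)⁻¹ • (Φ₂ (ζ + ((0 + -δ : ℝ) : ℂ) • h) - Φ₂ (ζ + ((0:ℝ):ℂ) • h))
      have e1 : ((0 + -δ : ℝ) : ℂ) • h = (δ:ℂ) • (-h) := by
        push_cast; rw [smul_neg, ← neg_smul]; ring_nf
      rw [e1]
      simp [Complex.real_smul, mul_comm]
    · -- right limit
      have h2 := hder ζ hζ h (by rw [hD]; exact hh)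
      refine h2.congr fun δ => ?_
      show ((δ:ℂ))⁻¹ * (Φ₂ (ζ + (δ:ℂ) • h) - Φ₂ ζ)
          = δ⁻¹ • (Φ₂ (ζ + ((0 + δ : ℝ) : ℂ) • h) - Φ₂ (ζ + ((0:ℝ):ℂ) • h))
      simp [Complex.real_smul]
  -- Step 2: derivative zero at any parameter value
  have key' : ∀ (ζ : A3), ∀ h ∈ D, ∀ t : ℝ, ζ + (t:ℂ) • h ∈ Ω →
      HasDerivAt (fun s : ℝ => Φ₂ (ζ + (s : ℂ) • h)) 0 t := by
    intro ζ h hh t ht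
    have h0 := key _ ht h hh
    have h2 : HasDerivAt (fun s : ℝ => Φ₂ (ζ + ((t + s : ℝ) : ℂ) • h)) 0 0 := by
      refine h0.congr_of_eventuallyEq (Filter.Eventually.of_forall fun s => ?_)
      push_cast
      rw [add_smul, add_assoc]
    have h3 : HasDerivAt (fun s : ℝ => Φ₂ (ζ + ((t + (-t + s) : ℝ) : ℂ) • h)) 0 t := by
      have h4 : HasDerivAt (fun s : ℝ => Φ₂ (ζ + ((t + s : ℝ) : ℂ) • h)) 0 (-t + t) := by
        rw [neg_add_cancel]; exact h2
      exact h4.comp_const_add (-t) t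
    refine h3.congr_of_eventuallyEq (Filter.Eventually.of_forall fun s => ?_)
    simp
  -- Step 3: constancy along a segment inside Ω (nonnegative parameter)
  have seg : ∀ (ζ : A3), ∀ h ∈ D, ∀ s : ℝ, 0 ≤ s →
      (∀ t ∈ Set.Icc (0:ℝ) s, ζ + (t:ℂ) • h ∈ Ω) →
      Φ₂ (ζ + (s:ℂ) • h) = Φ₂ ζ := by
    intro ζ h hh s hs hmem
    have hd : ∀ t ∈ Set.Icc (0:ℝ) s,
        HasDerivAt (fun t : ℝ => Φ₂ (ζ + (t:ℂ) • h)) 0 t :=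
      fun t ht => key' ζ h hh t (hmem t ht)
    have hconst := constant_of_has_deriv_right_zero
      (f := fun t : ℝ => Φ₂ (ζ + (t:ℂ) • h))
      (fun t ht => (hd t ht).continuousAt.continuousWithinAt)
      (fun t ht => (hd t (Set.mem_Icc_of_Ico ht)).hasDerivWithinAt)
    have := hconst s (Set.right_mem_Icc.2 hs)
    simpa using this
  -- Step 4: constancy along a segment, arbitrary sign
  have seg' : ∀ (ζ : A3), ∀ h ∈ D, ∀ s : ℝ,
      (∀ t ∈ Set.uIcc (0:ℝ) s, ζ + (t:ℂ) • h ∈ Ω) →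
      Φ₂ (ζ + (s:ℂ) • h) = Φ₂ ζ := by
    intro ζ h hh s hmem
    rcases le_or_gt 0 s with hs | hs
    · exact seg ζ h hh s hs fun t ht => hmem t (by rwa [Set.uIcc_of_le hs])
    · have e1 : ζ + (s:ℂ) • h = ζ + ((-s : ℝ):ℂ) • (-h) := by
        push_cast; rw [smul_neg, ← neg_smul, neg_neg]
      rw [e1]
      refine seg ζ (-h) (hDneg h hh) (-s) (by linarith) fun t ht => ?_
      have e2 : ζ + (t:ℂ) • (-h) = ζ + ((-t : ℝ):ℂ) • h := by
        push_cast; rw [smul_neg, ← neg_smul]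
      rw [e2]
      refine hmem (-t) ?_
      rw [Set.uIcc_of_ge hs.le]
      exact ⟨by linarith [ht.2], by linarith [ht.1]⟩
  have hρ : A3.rho ∈ D := by rw [hD]; simp
  have hiρ : Complex.I • A3.rho ∈ D := by rw [hD]; simp
  have hρ2 : A3.rho ^ 2 ∈ D := by rw [hD]; simp
  have hiρ2 : Complex.I • A3.rho ^ 2 ∈ D := by rw [hD]; simp
  -- Step 5: local constancy on fibers
  have loc : ∀ u ∈ Ω, ∃ ε > 0, Metric.ball u ε ⊆ Ω ∧
      ∀ v ∈ Metric.ball u ε, v.x0 = u.x0 → Φ₂ v = Φ₂ u := by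
    intro u hu
    obtain ⟨ε, hε, hball⟩ := Metric.isOpen_iff.1 hΩ u hu
    refine ⟨ε, hε, hball, ?_⟩
    intro v hv hv0
    set a : ℂ := v.x1 - u.x1 with ha
    set b : ℂ := v.x2 - u.x2 with hb
    have hvu : v = u + a • A3.rho + b • A3.rho ^ 2 := by
      ext <;> simp [ha, hb, A3.rho_sq_x0, A3.rho_sq_x1, A3.rho_sq_x2, hv0]
    have hdist : dist v u = Real.sqrt (‖a‖ ^ 2 + ‖b‖ ^ 2) := by
      rw [dist_eq_norm, ← A3.norm_combo a b]
      congr 1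
      rw [hvu]; abel
    -- all relevant intermediate points lie in the ball
    have hmem : ∀ c₁ c₂ : ℂ, ‖c₁‖ ≤ ‖a‖ →
        ‖c₂‖ ≤ ‖b‖ →
        u + c₁ • A3.rho + c₂ • A3.rho ^ 2 ∈ Metric.ball u ε := by
      intro c₁ c₂ h1 h2
      have hd : dist (u + c₁ • A3.rho + c₂ • A3.rho ^ 2) u
          = Real.sqrt (‖c₁‖ ^ 2 + ‖c₂‖ ^ 2) := by
        rw [dist_eq_norm, ← A3.norm_combo c₁ c₂]
        congr 1; abel
      rw [Metric.mem_ball, hd]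
      calc Real.sqrt (‖c₁‖ ^ 2 + ‖c₂‖ ^ 2)
          ≤ Real.sqrt (‖a‖ ^ 2 + ‖b‖ ^ 2) := by
            apply Real.sqrt_le_sqrt
            have := norm_nonneg c₁
            have := norm_nonneg c₂
            nlinarith
        _ = dist v u := hdist.symm
        _ < ε := Metric.mem_ball.1 hv
    have habs : ∀ t s : ℝ, t ∈ Set.uIcc 0 s → |t| ≤ |s| := by
      intro t s ht
      rcases Set.mem_uIcc.1 ht with ⟨h1, h2⟩ | ⟨h1, h2⟩
      · rw [abs_of_nonneg h1, abs_of_nonneg (h1.trans h2)]; exact h2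
      · rw [abs_of_nonpos h2, abs_of_nonpos (h1.trans h2)]; linarith
    -- the four path segments
    have step1 : Φ₂ (u + ((a.re : ℝ):ℂ) • A3.rho) = Φ₂ u := by
      refine seg' u A3.rho hρ a.re fun t ht => ?_
      have e : u + (t:ℂ) • A3.rho = u + (t:ℂ) • A3.rho + (0:ℂ) • A3.rho ^ 2 := by
        rw [zero_smul, add_zero]
      rw [e]
      refine hball (hmem _ _ ?_ (by simp))
      rw [Complex.norm_real, Real.norm_eq_abs]
      exact (habs t a.re ht).trans (Complex.abs_re_le_norm a)
    have step2 : Φ₂ ((u + ((a.re : ℝ):ℂ) • A3.rho) + ((a.im : ℝ):ℂ) • (Complex.I • A3.rho))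
        = Φ₂ (u + ((a.re : ℝ):ℂ) • A3.rho) := by
      refine seg' _ _ hiρ a.im fun t ht => ?_
      have e : (u + ((a.re : ℝ):ℂ) • A3.rho) + (t:ℂ) • (Complex.I • A3.rho)
          = u + ((a.re : ℝ) + (t:ℂ) * Complex.I) • A3.rho + (0:ℂ) • A3.rho ^ 2 := by
        rw [zero_smul, add_zero, smul_smul, add_smul, add_assoc]
      rw [e]
      refine hball (hmem _ _ ?_ (by simp))
      have h1 : ‖((a.re : ℂ) + (t:ℂ) * Complex.I)‖ ^ 2 = a.re ^ 2 + t ^ 2 := by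
        rw [Complex.sq_norm, Complex.normSq_apply]
        simp
        ring
      have h2 : |t| ≤ |a.im| := habs t a.im ht
      have h3 : t ^ 2 ≤ a.im ^ 2 := by nlinarith [abs_nonneg t, abs_nonneg a.im, sq_abs t, sq_abs a.im]
      have h4 : ‖a‖ ^ 2 = a.re ^ 2 + a.im ^ 2 := by
        rw [Complex.sq_norm, Complex.normSq_apply]; ring
      have h5 := norm_nonneg a
      have h6 := norm_nonneg ((a.re : ℂ) + (t:ℂ) * Complex.I)
      nlinarith
    have step3 : Φ₂ ((u + a • A3.rho) + ((b.re : ℝ):ℂ) • A3.rho ^ 2)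
        = Φ₂ (u + a • A3.rho) := by
      refine seg' _ _ hρ2 b.re fun t ht => ?_
      have e : (u + a • A3.rho) + (t:ℂ) • A3.rho ^ 2
          = u + a • A3.rho + (t:ℂ) • A3.rho ^ 2 := by rw [add_assoc]
      rw [e]
      refine hball (hmem _ _ (le_refl _) ?_)
      rw [Complex.norm_real, Real.norm_eq_abs]
      exact (habs t b.re ht).trans (Complex.abs_re_le_norm b)
    have step4 : Φ₂ ((u + a • A3.rho + ((b.re : ℝ):ℂ) • A3.rho ^ 2)
          + ((b.im : ℝ):ℂ) • (Complex.I • A3.rho ^ 2))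
        = Φ₂ (u + a • A3.rho + ((b.re : ℝ):ℂ) • A3.rho ^ 2) := by
      refine seg' _ _ hiρ2 b.im fun t ht => ?_
      have e : (u + a • A3.rho + ((b.re : ℝ):ℂ) • A3.rho ^ 2) + (t:ℂ) • (Complex.I • A3.rho ^ 2)
          = u + a • A3.rho + (((b.re : ℝ):ℂ) + (t:ℂ) * Complex.I) • A3.rho ^ 2 := by
        rw [smul_smul, add_smul, add_assoc]
      rw [e]
      refine hball (hmem _ _ (le_refl _) ?_)
      have h1 : ‖((b.re : ℂ) + (t:ℂ) * Complex.I)‖ ^ 2 = b.re ^ 2 + t ^ 2 := by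
        rw [Complex.sq_norm, Complex.normSq_apply]
        simp
        ring
      have h2 : |t| ≤ |b.im| := habs t b.im ht
      have h3 : t ^ 2 ≤ b.im ^ 2 := by nlinarith [abs_nonneg t, abs_nonneg b.im, sq_abs t, sq_abs b.im]
      have h4 : ‖b‖ ^ 2 = b.re ^ 2 + b.im ^ 2 := by
        rw [Complex.sq_norm, Complex.normSq_apply]; ring
      have h5 := norm_nonneg b
      have h6 := norm_nonneg ((b.re : ℂ) + (t:ℂ) * Complex.I)
      nlinarith
    -- assemble
    have ea : (u + ((a.re : ℝ):ℂ) • A3.rho) + ((a.im : ℝ):ℂ) • (Complex.I • A3.rho)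
        = u + a • A3.rho := by
      rw [smul_smul, add_assoc, ← add_smul]
      congr 2
      exact_mod_cast Complex.re_add_im a
    have eb : (u + a • A3.rho + ((b.re : ℝ):ℂ) • A3.rho ^ 2)
          + ((b.im : ℝ):ℂ) • (Complex.I • A3.rho ^ 2)
        = u + a • A3.rho + b • A3.rho ^ 2 := by
      rw [smul_smul, add_assoc (u + a • A3.rho), ← add_smul]
      congr 2
      exact_mod_cast Complex.re_add_im b
    calc Φ₂ v = Φ₂ (u + a • A3.rho + b • A3.rho ^ 2) := by rw [← hvu]
      _ = Φ₂ (u + a • A3.rho + ((b.re : ℝ):ℂ) • A3.rho ^ 2) := by rw [← eb, step4]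
      _ = Φ₂ (u + a • A3.rho) := step3
      _ = Φ₂ (u + ((a.re : ℝ):ℂ) • A3.rho) := by rw [← ea, step2]
      _ = Φ₂ u := step1
  -- Step 6: constancy on fibers via preconnectedness
  have const_on_fiber : ∀ ζ ∈ Ω, ∀ ζ' ∈ Ω, A3.pf ζ' = A3.pf ζ → Φ₂ ζ' = Φ₂ ζ := by
    intro ζ hζ ζ' hζ' hpf
    by_contra hne
    set z : ℂ := A3.pf ζ with hz
    set U : Set A3 := {w | ∃ ε > 0, Metric.ball w ε ⊆ Ω ∧
      ∀ v ∈ Metric.ball w ε, A3.pf v = z → Φ₂ v = Φ₂ ζ} with hU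
    set V : Set A3 := {w | ∃ ε > 0, Metric.ball w ε ⊆ Ω ∧
      ∀ v ∈ Metric.ball w ε, A3.pf v = z → Φ₂ v ≠ Φ₂ ζ} with hV
    have hballmono : ∀ (w w' : A3) (ε : ℝ), w' ∈ Metric.ball w (ε/2) →
        Metric.ball w' (ε/2) ⊆ Metric.ball w ε := by
      intro w w' ε hw' x hx
      rw [Metric.mem_ball] at *
      calc dist x w ≤ dist x w' + dist w' w := dist_triangle _ _ _
        _ < ε/2 + ε/2 := add_lt_add hx hw'
        _ = ε := by ring
    have hUopen : IsOpen U := by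
      rw [Metric.isOpen_iff]
      rintro w ⟨ε, hε, hb, hc⟩
      refine ⟨ε/2, by linarith, fun w' hw' => ⟨ε/2, by linarith,
        (hballmono w w' ε hw').trans hb, fun v hv hv0 =>
        hc v (hballmono w w' ε hw' hv) hv0⟩⟩
    have hVopen : IsOpen V := by
      rw [Metric.isOpen_iff]
      rintro w ⟨ε, hε, hb, hc⟩
      refine ⟨ε/2, by linarith, fun w' hw' => ⟨ε/2, by linarith,
        (hballmono w w' ε hw').trans hb, fun v hv hv0 =>
        hc v (hballmono w w' ε hw' hv) hv0⟩⟩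
    have hsub : Ω ∩ {w : A3 | A3.pf w = z} ⊆ U ∪ V := by
      rintro w ⟨hwΩ, hwz⟩
      obtain ⟨εw, hεw, hbw, hcw⟩ := loc w hwΩ
      by_cases hcase : Φ₂ w = Φ₂ ζ
      · left
        exact ⟨εw, hεw, hbw, fun v hv hv0 => by
          rw [hcw v hv (by simpa using hv0.trans hwz.symm)]; exact hcase⟩
      · right
        exact ⟨εw, hεw, hbw, fun v hv hv0 => by
          rw [hcw v hv (by simpa using hv0.trans hwz.symm)]; exact hcase⟩
    have hζU : ζ ∈ (Ω ∩ {w : A3 | A3.pf w = z}) ∩ U := by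
      obtain ⟨ε, hε, hb, hc⟩ := loc ζ hζ
      exact ⟨⟨hζ, rfl⟩, ε, hε, hb, fun v hv hv0 => hc v hv (by simpa [hz] using hv0)⟩
    have hζ'V : ζ' ∈ (Ω ∩ {w : A3 | A3.pf w = z}) ∩ V := by
      obtain ⟨ε, hε, hb, hc⟩ := loc ζ' hζ'
      refine ⟨⟨hζ', hpf⟩, ε, hε, hb, fun v hv hv0 => ?_⟩
      rw [hc v hv (by simpa using hv0.trans hpf.symm)]
      exact hne
    obtain ⟨w, hwS, hwU, hwV⟩ := hconn z U V hUopen hVopen hsub ⟨ζ, hζU⟩ ⟨ζ', hζ'V⟩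
    obtain ⟨ε₁, hε₁, _, hc₁⟩ := hwU
    obtain ⟨ε₂, hε₂, _, hc₂⟩ := hwV
    exact hc₂ w (Metric.mem_ball_self hε₂) hwS.2
      (hc₁ w (Metric.mem_ball_self hε₁) hwS.2)
  -- Step 7: conclude
  refine ⟨fun z => if h : ∃ ζ ∈ Ω, A3.pf ζ = z then Φ₂ h.choose else 0, ?_⟩
  intro ζ hζ
  have hex : ∃ ζ' ∈ Ω, A3.pf ζ' = A3.pf ζ := ⟨ζ, hζ, rfl⟩
  simp only []
  rw [dif_pos hex]
  obtain ⟨h1, h2⟩ := hex.choose_spec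
  exact (const_on_fiber ζ hζ hex.choose h1 h2).symm
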